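/- arXiv:2508.11164 — 3 statements merged into one kernel-verified Lean document; each statement's English description precedes it below -/
import Mathlib

section
/- Let G be a finite abelian group and let G = A ⊕ B be a factorization of G such that A is periodic. Then for any subset D of G with A = L_A ⊕ D, the quotient group G/L_A admits the factorization G/L_A = ((D + L_A)/L_A) ⊕ ((B + L_A)/L_A). Moreover, (D + L_A)/L_A is an aperiodic subset of G/L_A, |(D + L_A)/L_A| = |D|, and |(B + L_A)/L_A| = |B|. -/
/-!
Write `H = L_A`. Since `A = H + D` is a union of `H`-cosets, it is the full preimage of the image
`D̄` of `D` in `G/H`. If `d₁ + b₁ ≡ d₂ + b₂ (mod H)`, then with `l = d₂ + b₂ - d₁ - b₁ ∈ H` the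
element `l + d₁` lies in `A` and `(l + d₁) + b₁ = d₂ + b₂`, so uniqueness in `A ⊕ B` and then in
`H ⊕ D` gives `b₁ = b₂` and `d₁ = d₂`. This single fact yields both the uniqueness in
`D̄ ⊕ B̄` and the injectivity of `D → D̄` and `B → B̄`. A period `ḡ` of `D̄` is a period of its
preimage `A`, so `g ∈ H` and `D̄` is aperiodic.
-/

open Pointwise

/-- `G = A ⊕ B`: every element of `G` can be written uniquely as `a + b`
with `a ∈ A` and `b ∈ B`. -/
def IsFactorization {G : Type*} [AddCommGroup G] (A B : Set G) : Prop :=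
  ∀ g : G, ∃! ab : G × G, ab.1 ∈ A ∧ ab.2 ∈ B ∧ ab.1 + ab.2 = g

/-- The subgroup of periods `L_A = {g : g + A = A}` of a subset `A`. -/
def periods {G : Type*} [AddCommGroup G] (A : Set G) : AddSubgroup G :=
  AddAction.stabilizer G A

/-- A subset is periodic if it has a non-zero period. -/
def IsPeriodic {G : Type*} [AddCommGroup G] (A : Set G) : Prop :=
  periods A ≠ ⊥

/-- A Hajós group: a (finite abelian) group in which, for every factorization,
at least one factor is periodic. -/
def IsHajos (G : Type*) [AddCommGroup G] : Prop :=
  ∀ A B : Set G, IsFactorization A B → IsPeriodic A ∨ IsPeriodic B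

/-- `C` is a perfect code in the Cayley graph `Cay(G,S)`: every element of `G`
can be written uniquely as `s + c` with `s ∈ S₀ = S ∪ {0}` and `c ∈ C`. -/
def IsPerfectCode {G : Type*} [AddCommGroup G] (S C : Set G) : Prop :=
  IsFactorization (insert 0 S) C

/-- `A = X ⊕ Y` for subsets: `X + Y = A` and representations are unique. -/
def IsSubsetDirectSum {G : Type*} [AddCommGroup G] (X Y A : Set G) : Prop :=
  X + Y = A ∧
    ∀ x₁ ∈ X, ∀ y₁ ∈ Y, ∀ x₂ ∈ X, ∀ y₂ ∈ Y,
      x₁ + y₁ = x₂ + y₂ → x₁ = x₂ ∧ y₁ = y₂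

section

variable {G : Type*} [AddCommGroup G]

namespace IsFactorization

variable {A B : Set G}

theorem exists_add (hAB : IsFactorization A B) (g : G) : ∃ a ∈ A, ∃ b ∈ B, a + b = g := by
  obtain ⟨⟨a, b⟩, ⟨ha, hb, hab⟩, -⟩ := hAB g
  exact ⟨a, ha, b, hb, hab⟩

theorem eq_of_add_eq (hAB : IsFactorization A B) {a₁ a₂ b₁ b₂ : G} (ha₁ : a₁ ∈ A)
    (hb₁ : b₁ ∈ B) (ha₂ : a₂ ∈ A) (hb₂ : b₂ ∈ B) (h : a₁ + b₁ = a₂ + b₂) :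
    a₁ = a₂ ∧ b₁ = b₂ := by
  obtain ⟨_, -, hu⟩ := hAB (a₂ + b₂)
  exact Prod.ext_iff.mp <| (hu (a₁, b₁) ⟨ha₁, hb₁, h⟩).trans (hu (a₂, b₂) ⟨ha₂, hb₂, rfl⟩).symm

theorem of_exists_add_of_eq (hex : ∀ g : G, ∃ a ∈ A, ∃ b ∈ B, a + b = g)
    (huniq : ∀ ⦃a₁⦄, a₁ ∈ A → ∀ ⦃b₁⦄, b₁ ∈ B → ∀ ⦃a₂⦄, a₂ ∈ A → ∀ ⦃b₂⦄, b₂ ∈ B →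
      a₁ + b₁ = a₂ + b₂ → a₁ = a₂ ∧ b₁ = b₂) :
    IsFactorization A B := by
  intro g
  obtain ⟨a, ha, b, hb, rfl⟩ := hex g
  refine ⟨(a, b), ⟨ha, hb, rfl⟩, ?_⟩
  rintro ⟨a', b'⟩ ⟨ha', hb', h⟩
  obtain ⟨rfl, rfl⟩ := huniq ha' hb' ha hb h
  rfl

theorem nonempty_left (hAB : IsFactorization A B) : A.Nonempty :=
  let ⟨a, ha, _⟩ := hAB.exists_add 0
  ⟨a, ha⟩

end IsFactorization

theorem mem_periods_preimage {K : Type*} [AddCommGroup K] (f : G →+ K) {S : Set K} {g : G}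
    (hg : f g ∈ periods S) : g ∈ periods (f ⁻¹' S) := by
  change f g +ᵥ S = S at hg
  change g +ᵥ f ⁻¹' S = f ⁻¹' S
  ext x
  rw [Set.mem_vadd_set_iff_neg_vadd_mem, Set.mem_preimage, Set.mem_preimage, vadd_eq_add,
    map_add, map_neg, ← vadd_eq_add, ← Set.mem_vadd_set_iff_neg_vadd_mem, hg]

namespace IsSubsetDirectSum

variable {H : AddSubgroup G} {A D : Set G}

theorem preimage_image_mk (hD : IsSubsetDirectSum (H : Set G) D A) :
    QuotientAddGroup.mk ⁻¹' (QuotientAddGroup.mk '' D : Set (G ⧸ H)) = A := by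
  rw [QuotientAddGroup.preimage_image_mk_eq_add, add_comm, hD.1]

theorem injOn_mk (hD : IsSubsetDirectSum (H : Set G) D A) :
    D.InjOn (QuotientAddGroup.mk : G → G ⧸ H) := by
  intro d₁ hd₁ d₂ hd₂ h
  rw [QuotientAddGroup.eq] at h
  have := hD.2 _ h d₁ hd₁ 0 H.zero_mem d₂ hd₂ (by abel)
  exact neg_add_eq_zero.mp this.1

theorem periods_image_mk_eq_bot (hD : IsSubsetDirectSum (periods A : Set G) D A) :
    periods (QuotientAddGroup.mk '' D : Set (G ⧸ periods A)) = ⊥ := by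
  refine (AddSubgroup.eq_bot_iff_forall _).2 fun q hq => ?_
  obtain ⟨g, rfl⟩ := QuotientAddGroup.mk_surjective q
  have hg := mem_periods_preimage (QuotientAddGroup.mk' (periods A)) hq
  rw [QuotientAddGroup.coe_mk', hD.preimage_image_mk] at hg
  exact (QuotientAddGroup.eq_zero_iff g).2 hg

end IsSubsetDirectSum

namespace IsFactorization

variable {H : AddSubgroup G} {A B D : Set G}

theorem eq_of_mk_add_eq (hAB : IsFactorization A B) (hD : IsSubsetDirectSum (H : Set G) D A)
    {d₁ d₂ b₁ b₂ : G} (hd₁ : d₁ ∈ D) (hb₁ : b₁ ∈ B) (hd₂ : d₂ ∈ D) (hb₂ : b₂ ∈ B)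
    (h : (↑(d₁ + b₁) : G ⧸ H) = ↑(d₂ + b₂)) : d₁ = d₂ ∧ b₁ = b₂ := by
  rw [QuotientAddGroup.eq] at h
  set l := -(d₁ + b₁) + (d₂ + b₂)
  have hlA : l + d₁ ∈ A := hD.1 ▸ Set.add_mem_add h hd₁
  have hd₂A : d₂ ∈ A := hD.1 ▸ zero_add d₂ ▸ Set.add_mem_add H.zero_mem hd₂
  obtain ⟨hld, rfl⟩ := hAB.eq_of_add_eq hlA hb₁ hd₂A hb₂ (by simp only [l]; abel)
  obtain ⟨-, rfl⟩ := hD.2 l h d₁ hd₁ 0 H.zero_mem d₂ hd₂ (by rw [hld, zero_add])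
  exact ⟨rfl, rfl⟩

theorem image_mk (hAB : IsFactorization A B) (hD : IsSubsetDirectSum (H : Set G) D A) :
    IsFactorization (QuotientAddGroup.mk '' D : Set (G ⧸ H)) (QuotientAddGroup.mk '' B) := by
  refine of_exists_add_of_eq (fun q => ?_) ?_
  · obtain ⟨g, rfl⟩ := QuotientAddGroup.mk_surjective q
    obtain ⟨a, ha, b, hb, rfl⟩ := hAB.exists_add g
    rw [← hD.1] at ha
    obtain ⟨l, hl, d, hd, rfl⟩ := ha
    refine ⟨d, ⟨d, hd, rfl⟩, b, ⟨b, hb, rfl⟩, ?_⟩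
    rw [← QuotientAddGroup.mk_add, QuotientAddGroup.eq, show -(d + b) + (l + d + b) = l by abel]
    exact hl
  · rintro _ ⟨d₁, hd₁, rfl⟩ _ ⟨b₁, hb₁, rfl⟩ _ ⟨d₂, hd₂, rfl⟩ _ ⟨b₂, hb₂, rfl⟩ h
    obtain ⟨rfl, rfl⟩ := hAB.eq_of_mk_add_eq hD hd₁ hb₁ hd₂ hb₂ h
    exact ⟨rfl, rfl⟩

theorem injOn_mk_right (hAB : IsFactorization A B) (hD : IsSubsetDirectSum (H : Set G) D A) :
    B.InjOn (QuotientAddGroup.mk : G → G ⧸ H) := by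
  obtain ⟨d, hd⟩ : D.Nonempty := (hD.1 ▸ hAB.nonempty_left).of_add_right
  intro b₁ hb₁ b₂ hb₂ h
  refine (hAB.eq_of_mk_add_eq hD hd hb₁ hd hb₂ ?_).2
  rw [QuotientAddGroup.mk_add, h, ← QuotientAddGroup.mk_add]

end IsFactorization

end

theorem quotient_factorization_general {G : Type*} [AddCommGroup G]
    (A B D : Set G)
    (hAB : IsFactorization A B)
    (hD : IsSubsetDirectSum (↑(periods A)) D A) :
    IsFactorization
        (QuotientAddGroup.mk '' D : Set (G ⧸ periods A))
        (QuotientAddGroup.mk '' B : Set (G ⧸ periods A)) ∧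
      ¬ IsPeriodic (QuotientAddGroup.mk '' D : Set (G ⧸ periods A)) ∧
      (QuotientAddGroup.mk '' D : Set (G ⧸ periods A)).ncard = D.ncard ∧
      (QuotientAddGroup.mk '' B : Set (G ⧸ periods A)).ncard = B.ncard :=
  ⟨hAB.image_mk hD, not_not.2 hD.periods_image_mk_eq_bot,
    hD.injOn_mk.ncard_image, (hAB.injOn_mk_right hD).ncard_image⟩

/-- Lemma (quotient): if `G = A ⊕ B` is a factorization of a finite abelian group
with `A` periodic and `A = L_A ⊕ D`, then
`G/L_A = ((D + L_A)/L_A) ⊕ ((B + L_A)/L_A)`; moreover `(D + L_A)/L_A` is aperiodic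
in `G/L_A`, `|(D + L_A)/L_A| = |D|`, and `|(B + L_A)/L_A| = |B|`. -/
theorem quotient_factorization {G : Type*} [AddCommGroup G] [Fintype G]
    (A B D : Set G)
    (hAB : IsFactorization A B)
    (hA : IsPeriodic A)
    (hD : IsSubsetDirectSum (↑(periods A)) D A) :
    IsFactorization
        (QuotientAddGroup.mk '' D : Set (G ⧸ periods A))
        (QuotientAddGroup.mk '' B : Set (G ⧸ periods A)) ∧
      ¬ IsPeriodic (QuotientAddGroup.mk '' D : Set (G ⧸ periods A)) ∧
      (QuotientAddGroup.mk '' D : Set (G ⧸ periods A)).ncard = D.ncard ∧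
      (QuotientAddGroup.mk '' B : Set (G ⧸ periods A)).ncard = B.ncard :=
  quotient_factorization_general A B D hAB hD
end

section
/- Let G be a finite abelian group, let G = A ⊕ B be a factorization of G with A periodic, and let D ⊆ G satisfy A = L_A ⊕ D. Suppose |(D + L_A)/L_A| = n and |(B + L_A)/L_A| = m, and write L_A = {l_i : i ∈ [t]}, (D + L_A)/L_A = {d_j + L_A : j ∈ [n]}, and (B + L_A)/L_A = {b_k + L_A : k ∈ [m]}. Then A = {l_i + d_j : i ∈ [t], j ∈ [n]}, and there exist elements ℓ_k ∈ L_A (k ∈ [m]) such that B = {b_k + ℓ_k : k ∈ [m]}. -/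
open Pointwise

/-!
Since `A = L_A + D`, the set `A` is the full preimage of its image in `G / L_A`, which is the
image of the representatives `d_j`. In `G = A ⊕ B`, two elements `x, y` of `B` in one coset of
`L_A` give two representations `(y - x + a) + x = a + y` of the same element, so `B` contains
exactly one element of each coset `b_k + L_A`.
-/

open Set

section Periods

variable {G : Type*} [AddCommGroup G] {A B : Set G}

lemma add_mem_of_mem_periods {x a : G} (hx : x ∈ periods A) (ha : a ∈ A) : x + a ∈ A := by
  rw [← AddAction.mem_stabilizer_iff.mp hx]
  exact vadd_mem_vadd_set ha

lemma IsFactorization.injOn_mk_periods (hAB : IsFactorization A B) :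
    InjOn (QuotientAddGroup.mk : G → G ⧸ periods A) B := by
  intro x hx y hy hxy
  have hyx : y - x ∈ periods A := (QuotientAddGroup.eq_iff_sub_mem).mp hxy.symm
  obtain ⟨⟨a, _⟩, ⟨ha, -, -⟩, -⟩ := hAB 0
  have hpair : (y - x + a, x) = (a, y) :=
    (hAB (a + y)).unique
      ⟨add_mem_of_mem_periods hyx ha, hx, show y - x + a + x = a + y by abel⟩ ⟨ha, hy, rfl⟩
  exact congrArg Prod.snd hpair

end Periods

lemma AddSubgroup.add_eq_add_of_image_mk_eq {G : Type*} [AddCommGroup G] {H : AddSubgroup G}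
    {s t : Set G} (h : (QuotientAddGroup.mk '' s : Set (G ⧸ H)) = QuotientAddGroup.mk '' t) :
    (H : Set G) + s = H + t := by
  rw [add_comm, ← QuotientAddGroup.preimage_image_mk_eq_add, h,
    QuotientAddGroup.preimage_image_mk_eq_add, add_comm]

lemma Set.InjOn.exists_eq_range_of_image_eq_range {α β ι : Type*} {f : α → β} {s : Set α}
    (hf : s.InjOn f) {g : ι → β} (h : f '' s = range g) :
    ∃ v : ι → α, (∀ i, f (v i) = g i) ∧ s = range v := by
  have hg : ∀ i, ∃ x ∈ s, f x = g i := fun i => by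
    rw [← mem_image, h]
    exact mem_range_self i
  choose v hvs hv using hg
  refine ⟨v, hv, Subset.antisymm (fun x hx => ?_) (range_subset_iff.mpr hvs)⟩
  obtain ⟨i, hi⟩ : f x ∈ range g := h ▸ mem_image_of_mem f hx
  exact ⟨i, hf (hvs i) hx ((hv i).trans hi)⟩

theorem factors_from_quotient_general {G : Type*} [AddCommGroup G]
    (A B D : Set G) (t n m : ℕ)
    (l : Fin t → G) (d : Fin n → G) (b : Fin m → G)
    (hAB : IsFactorization A B)
    (hD : IsSubsetDirectSum (↑(periods A)) D A)
    (hl : (periods A : Set G) = Set.range l)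
    (hd : (QuotientAddGroup.mk '' D : Set (G ⧸ periods A)) =
      Set.range fun j : Fin n => (QuotientAddGroup.mk (d j) : G ⧸ periods A))
    (hb : (QuotientAddGroup.mk '' B : Set (G ⧸ periods A)) =
      Set.range fun k : Fin m => (QuotientAddGroup.mk (b k) : G ⧸ periods A)) :
    A = Set.range (fun ij : Fin t × Fin n => l ij.1 + d ij.2) ∧
      ∃ ℓ : Fin m → G, (∀ k, ℓ k ∈ periods A) ∧
        B = Set.range fun k : Fin m => b k + ℓ k := by
  constructor
  · calc A = (periods A : Set G) + D := hD.1.symm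
      _ = (periods A : Set G) + range d :=
          AddSubgroup.add_eq_add_of_image_mk_eq (by rw [hd, ← range_comp]; rfl)
      _ = _ := by rw [hl, ← image2_add, image2_range]
  · obtain ⟨v, hv, rfl⟩ := hAB.injOn_mk_periods.exists_eq_range_of_image_eq_range hb
    refine ⟨fun k => v k - b k, fun k => QuotientAddGroup.eq_iff_sub_mem.mp (hv k), ?_⟩
    simp only [add_sub_cancel]

/-- If `G = A ⊕ B` with `A` periodic, `A = L_A ⊕ D`,
`|(D + L_A)/L_A| = n`, `|(B + L_A)/L_A| = m`, and
`L_A = {l_i : i ∈ [t]}`, `(D + L_A)/L_A = {d_j + L_A : j ∈ [n]}`,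
`(B + L_A)/L_A = {b_k + L_A : k ∈ [m]}`, then
`A = {l_i + d_j : i ∈ [t], j ∈ [n]}` and `B = {b_k + ℓ_k : k ∈ [m]}`
for some `ℓ_k ∈ L_A`. -/
theorem factors_from_quotient {G : Type*} [AddCommGroup G] [Fintype G]
    (A B D : Set G) (t n m : ℕ)
    (l : Fin t → G) (d : Fin n → G) (b : Fin m → G)
    (hAB : IsFactorization A B)
    (hA : IsPeriodic A)
    (hD : IsSubsetDirectSum (↑(periods A)) D A)
    (hn : (QuotientAddGroup.mk '' D : Set (G ⧸ periods A)).ncard = n)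
    (hm : (QuotientAddGroup.mk '' B : Set (G ⧸ periods A)).ncard = m)
    (hl : (periods A : Set G) = Set.range l)
    (hd : (QuotientAddGroup.mk '' D : Set (G ⧸ periods A)) =
      Set.range fun j : Fin n => (QuotientAddGroup.mk (d j) : G ⧸ periods A))
    (hb : (QuotientAddGroup.mk '' B : Set (G ⧸ periods A)) =
      Set.range fun k : Fin m => (QuotientAddGroup.mk (b k) : G ⧸ periods A)) :
    A = Set.range (fun ij : Fin t × Fin n => l ij.1 + d ij.2) ∧
      ∃ ℓ : Fin m → G, (∀ k, ℓ k ∈ periods A) ∧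
        B = Set.range fun k : Fin m => b k + ℓ k :=
  factors_from_quotient_general A B D t n m l d b hAB hD hl hd hb
end

section
/- Let p be an odd prime, let G = Z_p × Z_p, let S be a proper subset of G∖{0} that generates G, and let S₀ = S ∪ {(0,0)}. Then a subset C of G is a perfect code in Cay(G,S) if and only if |S| = p − 1 and there exist a, b ∈ Z_p such that {a·s₁ − b·s₂ : (s₁,s₂) ∈ S₀} = Z_p and C = {(b·n + c, a·n + d) : n ∈ Z_p} for some c, d ∈ Z_p. -/
open Pointwise

/-!
If `insert 0 S ⊕ C` is the whole plane `G = ZMod p × ZMod p`, both factors have `p` elements. For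
a nonzero linear form `φ : G → ZMod p` and a primitive `p`-th root of unity `ζ`, the vanishing sum
`∑ g, ζ ^ φ g` factors as the product of the sums over the two factors, and a sum of `p` powers of
`ζ` vanishes only if the exponents are distinct. So in each of the `p + 1` directions one of the
factors meets every line at most once, and one factor does so in at least `(p + 1) / 2` directions.
By Rédei's theorem on the directions determined by a function `ZMod p → ZMod p`, that factor lies
on a line. It cannot be `insert 0 S`, which contains `0` and generates `G`; so `C` is a line, and
`insert 0 S` meets each line parallel to it exactly once. Conversely, such a pair factors `G`.
-/

open Polynomial Finset Function

namespace IsFactorization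

variable {G : Type*} [AddCommGroup G] {A B : Set G}

noncomputable def equiv (h : IsFactorization A B) : A × B ≃ G :=
  Equiv.ofBijective (fun x => x.1 + x.2) <| by
    refine ⟨fun x y hxy => ?_, fun g => ?_⟩
    · have := (h _).unique (y₁ := (x.1.1, x.2.1)) (y₂ := (y.1.1, y.2.1))
        ⟨x.1.2, x.2.2, rfl⟩ ⟨y.1.2, y.2.2, hxy.symm⟩
      simp only [Prod.mk.injEq] at this
      ext <;> simp [this]
    · obtain ⟨⟨a, b⟩, ⟨ha, hb, hab⟩, -⟩ := h g
      exact ⟨(⟨a, ha⟩, ⟨b, hb⟩), hab⟩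

lemma ncard_mul_ncard (h : IsFactorization A B) : A.ncard * B.ncard = Nat.card G := by
  rw [← Nat.card_coe_set_eq, ← Nat.card_coe_set_eq, ← Nat.card_prod, Nat.card_congr h.equiv]

lemma sum_mul_sum_addChar [Fintype G] [Fintype A] [Fintype B] {R : Type*} [CommRing R]
    (h : IsFactorization A B) (ψ : AddChar G R) :
    (∑ a : A, ψ a) * (∑ b : B, ψ b) = ∑ g, ψ g := by
  rw [Fintype.sum_mul_sum, ← Fintype.sum_prod_type']
  exact Fintype.sum_equiv h.equiv _ _ fun x => (AddChar.map_add_eq_mul ψ _ _).symm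

lemma image_eq_univ {H : Type*} [AddCommGroup H] (h : IsFactorization A B) {φ : G →+ H}
    (hφ : Surjective φ) {y : H} (hB : ∀ b ∈ B, φ b = y) : φ '' A = Set.univ := by
  refine Set.eq_univ_of_forall fun w => ?_
  obtain ⟨g, hg⟩ := hφ (w + y)
  obtain ⟨⟨a, b⟩, ⟨ha, hb, rfl⟩, -⟩ := h g
  refine ⟨a, ha, ?_⟩
  rwa [map_add, hB b hb, add_left_inj] at hg

end IsFactorization

lemma isFactorization_of_bijOn {G H : Type*} [AddCommGroup G] [AddCommGroup H] {φ : G →+ H}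
    {A : Set G} (hA : Set.BijOn φ A Set.univ) (y : H) : IsFactorization A (φ ⁻¹' {y}) := by
  intro g
  obtain ⟨a, ha, hay⟩ := hA.surjOn (Set.mem_univ (φ g - y))
  refine ⟨(a, g - a), ⟨ha, by simp [hay], add_sub_cancel _ _⟩, ?_⟩
  rintro ⟨a', c⟩ ⟨ha', hc, rfl⟩
  have : a' = a := hA.injOn ha' ha <| by
    simp only [Set.mem_preimage, Set.mem_singleton_iff] at hc
    rw [hay, map_add, hc, add_sub_cancel_right]
  simp [this]

lemma Nat.Prime.eq_of_mul_eq_mul_self {p a b : ℕ} (hp : p.Prime) (h : a * b = p * p)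
    (ha : a ≠ 1) (hb : b ≠ 1) : a = p := by
  obtain ⟨k, hk, rfl⟩ := (Nat.dvd_prime_pow hp).1 (Dvd.intro b (h.trans (sq p).symm))
  interval_cases k
  · simp at ha
  · simp
  · rw [← sq, mul_eq_left₀ (pow_ne_zero 2 hp.ne_zero)] at h
    exact absurd h hb

lemma Polynomial.cyclotomic_prime_coeff {R : Type*} [Ring R] {p : ℕ} [Fact p.Prime] {n : ℕ}
    (hn : n < p) :
    (cyclotomic p R).coeff n = 1 := by
  simp [cyclotomic_prime, coeff_X_pow, hn]

/-- `∑ i, X ^ (f i).val` is divisible by the minimal polynomial `1 + X + ⋯ + X ^ (p - 1)` of `ζ`,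
hence a constant multiple of it. -/
lemma IsPrimitiveRoot.injective_of_sum_pow_val_eq_zero {K : Type*} [Field K] [CharZero K]
    {p : ℕ} [hp : Fact p.Prime] {ζ : K} (hζ : IsPrimitiveRoot ζ p) {ι : Type*} [Fintype ι]
    (hι : Fintype.card ι = p) {f : ι → ZMod p} (hsum : ∑ i, ζ ^ (f i).val = 0) :
    Injective f := by
  refine ((Fintype.bijective_iff_surjective_and_card f).2 ⟨fun k => ?_, by simp [hι]⟩).1
  by_contra! hk
  set P : ℤ[X] := ∑ i, X ^ (f i).val
  obtain ⟨q, hq⟩ : cyclotomic p ℤ ∣ P := by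
    rw [cyclotomic_eq_minpoly hζ hp.out.pos]
    exact minpoly.isIntegrallyClosed_dvd (hζ.isIntegral hp.out.pos) (by simpa [P] using hsum)
  have hPdeg : P.natDegree ≤ p - 1 :=
    natDegree_sum_le_of_forall_le _ _ fun i _ => by
      simpa using Nat.le_sub_one_of_lt (ZMod.val_lt (f i))
  have hq0 : q.natDegree = 0 := by
    rcases eq_or_ne q 0 with rfl | hq0
    · simp
    have := natDegree_mul (cyclotomic_ne_zero p ℤ) hq0
    rw [← hq, natDegree_cyclotomic, Nat.totient_prime hp.out] at this
    omega
  have hPk : P.coeff k.val = 0 := by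
    simp only [P, finsetSum_coeff, coeff_X_pow]
    exact Finset.sum_eq_zero fun i _ => if_neg fun h => hk i (ZMod.val_injective _ h.symm)
  rw [hq, eq_C_of_natDegree_eq_zero hq0, coeff_mul_C, cyclotomic_prime_coeff (ZMod.val_lt k),
    one_mul] at hPk
  have hP1 := congrArg (Polynomial.eval 1) hq
  rw [eq_C_of_natDegree_eq_zero hq0, hPk] at hP1
  simp [P, eval_finsetSum, hι, hp.out.ne_zero] at hP1

/-- The character `g ↦ ζ ^ φ g` has vanishing sum over `G`, and this sum factors as the product
of its sums over `A` and over `B`. -/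
lemma IsFactorization.injOn_or_injOn {G : Type*} [AddCommGroup G] [Fintype G] {A B : Set G}
    (h : IsFactorization A B) {p : ℕ} [hp : Fact p.Prime] (hA : A.ncard = p) (hB : B.ncard = p)
    {φ : G →+ ZMod p} (hφ : Surjective φ) : Set.InjOn φ A ∨ Set.InjOn φ B := by
  classical
  have hζ := Complex.isPrimitiveRoot_exp p (NeZero.ne p)
  set ψ := (AddChar.zmodChar p hζ.pow_eq_one).compAddMonoidHom φ
  have hψ : ψ ≠ 1 := by
    obtain ⟨g, hg⟩ := hφ 1
    refine AddChar.ne_one_iff.2 ⟨g, ?_⟩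
    simpa [ψ, hg, AddChar.zmodChar_apply, ZMod.val_one] using hζ.ne_one hp.out.one_lt
  have hsum := h.sum_mul_sum_addChar ψ
  rw [AddChar.sum_eq_zero_of_ne_one hψ] at hsum
  have key {X : Set G} (hX : X.ncard = p) (h0 : ∑ x : X, ψ x = 0) : Set.InjOn φ X := by
    refine Set.injOn_iff_injective.2 (hζ.injective_of_sum_pow_val_eq_zero ?_ ?_)
    · rw [← Nat.card_eq_fintype_card, Nat.card_coe_set_eq, hX]
    · simpa [ψ, AddChar.zmodChar_apply] using h0
  rcases mul_eq_zero.1 hsum with h0 | h0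
  · exact Or.inl (key hA h0)
  · exact Or.inr (key hB h0)

lemma Polynomial.natDegree_eq_zero_of_derivative_eq_zero_of_natDegree_lt {R : Type*}
    [CommRing R] [NoZeroDivisors R] {p : ℕ} [CharP R p] [NeZero p] {f : R[X]}
    (hf : derivative f = 0) (hdeg : f.natDegree < p) : f.natDegree = 0 := by
  rw [← expand_contract p hf (NeZero.ne p), natDegree_expand] at hdeg ⊢
  simp [Nat.lt_one_iff.1 (Nat.lt_of_mul_lt_mul_right (a := p) (by simpa using hdeg))]

/-- A root of multiplicity `m` of the product is a root of multiplicity at least `m - 1` of its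
derivative. -/
lemma Multiset.prod_X_sub_C_dvd_mul_derivative {K : Type*} [Field K] {s : Multiset K}
    {h : K[X]} (hh : h ≠ 0) (hderiv : derivative (s.map fun a => X - C a).prod ≠ 0)
    (hroot : ∀ a ∈ s, h.IsRoot a) :
    (s.map fun a => X - C a).prod ∣ h * derivative (s.map fun a => X - C a).prod := by
  classical
  set F := (s.map fun a => X - C a).prod
  have hne : h * derivative F ≠ 0 := mul_ne_zero hh hderiv
  refine (Multiset.prod_X_sub_C_dvd_iff_le_roots hne s).2 (Multiset.le_iff_count.2 fun a => ?_)
  by_cases ha : a ∈ s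
  · have h1 : 1 ≤ rootMultiplicity a h := (rootMultiplicity_pos hh).2 (hroot a ha)
    have h2 := rootMultiplicity_sub_one_le_derivative_rootMultiplicity_of_ne_zero F a hderiv
    have h3 : s.count a = rootMultiplicity a F := by
      rw [← count_roots, roots_multiset_prod_X_sub_C]
    rw [count_roots, rootMultiplicity_mul hne]
    omega
  · simp [Multiset.count_eq_zero.2 ha]

/-- By Newton's identities, `k * e_k` is a combination of products `e_i * p_(k-i)` with `i < k`. -/
lemma prod_X_sub_C_coeff_eq_zero_of_sum_pow_eq_zero {K : Type*} [Field K] {p : ℕ} [CharP K p]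
    {ι : Type*} [Fintype ι] (v : ι → K) {N : ℕ} (hN : N < p)
    (hv : ∀ k ∈ Icc 1 N, ∑ i, v i ^ k = 0) {k : ℕ} (hk : k ∈ Icc 1 N)
    (hkι : k ≤ Fintype.card ι) :
    ((univ.val.map v).map fun a => X - C a).prod.coeff (Fintype.card ι - k) = 0 := by
  obtain ⟨hk1, hkN⟩ := mem_Icc.1 hk
  have hnewton := congrArg (MvPolynomial.aeval v) (MvPolynomial.mul_esymm_eq_sum ι K k)
  have hsum : ∑ a ∈ antidiagonal k with a.1 < k,
      (-1) ^ a.1 * (univ.val.map v).esymm a.1 * ∑ i, v i ^ a.2 = 0 := by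
    refine Finset.sum_eq_zero fun a ha => ?_
    obtain ⟨hak, hlt⟩ := Finset.mem_filter.1 ha
    rw [HasAntidiagonal.mem_antidiagonal] at hak
    rw [hv a.2 (mem_Icc.2 ⟨by omega, by omega⟩), mul_zero]
  simp only [map_mul, map_natCast, map_pow, map_neg, map_one, map_sum,
    MvPolynomial.aeval_esymm_eq_multiset_esymm, MvPolynomial.psum, MvPolynomial.aeval_X,
    hsum, mul_zero] at hnewton
  have hk0 : (k : K) ≠ 0 := by
    rw [Ne, CharP.cast_eq_zero_iff K p]
    exact fun h => absurd (Nat.le_of_dvd (by omega) h) (by omega)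
  rw [Multiset.prod_X_sub_C_coeff _ (by simp)]
  simp [Nat.sub_sub_self hkι, (mul_eq_zero.1 hnewton).resolve_left hk0]

section Redei

variable {p : ℕ} [hp : Fact p.Prime]

/-- Rédei's lacunary polynomial argument: the roots of `X ^ p + g` are roots of `X + g` (as
`a ^ p = a`), so `X ^ p + g` divides `(X + g) * g'`, whose degree is too small unless `g' = 0`. -/
theorem exists_eq_of_prod_X_sub_C_eq_X_pow_add {s : Multiset (ZMod p)} {g : (ZMod p)[X]}
    (hs : ¬ s.Nodup) (hg : 2 * g.natDegree ≤ p)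
    (hprod : (s.map fun a => X - C a).prod = X ^ p + g) :
    ∃ c, ∀ a ∈ s, a = c := by
  set F := (s.map fun a => X - C a).prod
  have hroots : F.roots = s := roots_multiset_prod_X_sub_C s
  have hF0 : F ≠ 0 := (monic_multiset_prod_of_monic _ _ fun a _ => monic_X_sub_C a).ne_zero
  have hroot (a) (ha : a ∈ s) : a + g.eval a = 0 := by
    have : F.IsRoot a := (mem_roots hF0).1 (hroots ▸ ha)
    simpa [hprod, ZMod.pow_card] using this
  have hp2 := hp.out.two_le
  by_cases hg' : derivative g = 0
  · have hg0 := natDegree_eq_zero_of_derivative_eq_zero_of_natDegree_lt hg' (by omega)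
    refine ⟨-g.coeff 0, fun a ha => ?_⟩
    have := hroot a ha
    rw [eq_C_of_natDegree_eq_zero hg0, eval_C] at this
    linear_combination this
  exfalso
  by_cases hXg : X + g = 0
  · refine hs ?_
    have : F = X ^ Fintype.card (ZMod p) - X := by
      rw [hprod, ZMod.card]; linear_combination hXg
    rw [← hroots, this, FiniteField.roots_X_pow_card_sub_X]
    exact Finset.univ.nodup
  have hFg : derivative F = derivative g := by simp [hprod, derivative_X_pow]
  have hdvd : F ∣ (X + g) * derivative g := hFg ▸
    Multiset.prod_X_sub_C_dvd_mul_derivative hXg (hFg ▸ hg') fun a ha => by simpa using hroot a ha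
  have hFdeg : F.natDegree = p := by
    rw [hprod, natDegree_add_eq_left_of_natDegree_lt] <;> simp; omega
  have hg1 : 1 ≤ g.natDegree := by
    by_contra! h
    exact hg' (derivative_of_natDegree_zero (by omega))
  have hXgdeg : (X + g).natDegree ≤ g.natDegree :=
    (natDegree_add_le _ _).trans (by simp [hg1])
  have : p ≤ g.natDegree + (g.natDegree - 1) := calc
    p = F.natDegree := hFdeg.symm
    _ ≤ ((X + g) * derivative g).natDegree := natDegree_le_of_dvd hdvd (mul_ne_zero hXg hg')
    _ ≤ (X + g).natDegree + (derivative g).natDegree := natDegree_mul_le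
    _ ≤ g.natDegree + (g.natDegree - 1) := add_le_add hXgdeg (natDegree_derivative_le g)
  omega

/-- For `k < p - 1`, `t ↦ ∑ x, (σ x - t * x) ^ k` is a polynomial of degree less than `k`
(its `t ^ k`-coefficient is `(-1) ^ k * ∑ x, x ^ k = 0`), and it vanishes at every `t` for which
`x ↦ σ x - t * x` is a permutation. -/
lemma sum_pow_sub_mul_eq_zero (σ : ZMod p → ZMod p) {k : ℕ} (hk : k < p - 1)
    (hkN : k ≤ #{t | Injective fun x => σ x - t * x}) (t : ZMod p) :
    ∑ x, (σ x - t * x) ^ k = 0 := by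
  have hpow : ∑ x : ZMod p, x ^ k = 0 :=
    FiniteField.sum_pow_lt_card_sub_one (ZMod p) k (by rwa [ZMod.card])
  set P : (ZMod p)[X] := ∑ x, (C (σ x) - C x * X) ^ k
  have hP (t : ZMod p) : P.eval t = ∑ x, (σ x - t * x) ^ k := by
    simp [P, eval_finsetSum, mul_comm t]
  have hlin (x : ZMod p) : (C (σ x) - C x * X).natDegree ≤ 1 := by
    refine (natDegree_sub_le _ _).trans (max_le (by simp) ?_)
    exact natDegree_C_mul_le _ _ |>.trans (by simp)
  have hdeg : P.degree < k := by
    refine (degree_lt_iff_coeff_zero _ _).2 fun m hm => ?_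
    rw [finsetSum_coeff]
    rcases hm.lt_or_eq with hm | rfl
    · exact Finset.sum_eq_zero fun x _ =>
        coeff_eq_zero_of_natDegree_lt ((natDegree_pow_le_of_le k (hlin x)).trans_lt (by omega))
    · have (x : ZMod p) : ((C (σ x) - C x * X) ^ k).coeff k = (-1) ^ k * x ^ k := by
        have := coeff_pow_of_natDegree_le (m := k) (hlin x)
        rw [mul_one] at this
        rw [this, ← neg_pow]
        simp
      rw [Finset.sum_congr rfl fun x _ => this x, ← Finset.mul_sum, hpow, mul_zero]
  have hP0 : P = 0 := by
    refine eq_zero_of_degree_lt_of_eval_finset_eq_zero _ (hdeg.trans_le (by exact_mod_cast hkN))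
      fun t ht => ?_
    have hbij := Finite.injective_iff_bijective.1 (Finset.mem_filter.1 ht).2
    rw [hP, ← hpow]
    exact Fintype.sum_bijective _ hbij _ _ fun _ => rfl
  rw [← hP, hP0, eval_zero]

/-- **Rédei's theorem**: the graph of `σ` determines the slopes `t` for which `x ↦ σ x - t * x` is
not injective; if there are at most `(p + 1) / 2` of them, `σ` is affine. For a determined slope
`m`, the power sums of `σ x - m * x` vanish in low degrees, so `∏ x, (X - (σ x - m * x))` is
lacunary. -/
theorem exists_eq_mul_add_of_card_injective (σ : ZMod p → ZMod p)
    (h : p - 1 ≤ 2 * #{t | Injective fun x => σ x - t * x}) :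
    ∃ m c, ∀ x, σ x = m * x + c := by
  have hp2 := hp.out.two_le
  set m := σ 1 - σ 0
  set v : ZMod p → ZMod p := fun x => σ x - m * x
  set s := univ.val.map v
  set M := min #{t | Injective fun x => σ x - t * x} (p - 2)
  have hs : ¬ s.Nodup := fun hs =>
    zero_ne_one (Multiset.inj_on_of_nodup_map hs 0 (by simp) 1 (by simp) (by simp [v, m]))
  set F := (s.map fun a => X - C a).prod
  have hFdeg : F.natDegree = p := by simp [F, s]
  have hFcoeff (k) (hk : k ∈ Icc 1 M) : F.coeff (p - k) = 0 := by
    have := prod_X_sub_C_coeff_eq_zero_of_sum_pow_eq_zero v (show M < p by omega)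
      (fun k hk => sum_pow_sub_mul_eq_zero σ (by simp at hk; omega) (by simp at hk; omega) m)
      hk (by simp at hk ⊢; omega)
    rwa [ZMod.card] at this
  have hgdeg : (F - X ^ p).natDegree ≤ p - M - 1 := by
    refine natDegree_le_iff_coeff_eq_zero.2 fun n hn => ?_
    rw [coeff_sub, coeff_X_pow]
    rcases lt_trichotomy n p with hnp | rfl | hnp
    · have := hFcoeff (p - n) (mem_Icc.2 ⟨by omega, by omega⟩)
      rw [Nat.sub_sub_self hnp.le] at this
      simp [hnp.ne, this]
    · have hF : F.Monic := monic_multiset_prod_of_monic _ _ fun a _ => monic_X_sub_C a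
      simp [← hFdeg, hF.coeff_natDegree]
    · simp [hnp.ne', coeff_eq_zero_of_natDegree_lt (hFdeg ▸ hnp)]
  obtain ⟨c, hc⟩ := exists_eq_of_prod_X_sub_C_eq_X_pow_add hs (by omega) (add_sub_cancel _ F).symm
  exact ⟨m, c, fun x => by linear_combination hc (v x) (Multiset.mem_map_of_mem _ (mem_univ x))⟩

end Redei

section Plane

variable {p : ℕ} [hp : Fact p.Prime]

open scoped Classical in
lemma exists_forall_eq_mul_add_of_injOn {V : Type*} {X : Set V} (hX : X.ncard = p)
    {f₀ f₁ : V → ZMod p} (h₀ : Set.InjOn f₀ X)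
    (h : p - 1 ≤ 2 * #{t | Set.InjOn (fun v => f₁ v - t * f₀ v) X}) :
    ∃ m c, ∀ v ∈ X, f₁ v = m * f₀ v + c := by
  have hbij : Bijective (X.domRestrict f₀) :=
    (Set.injOn_iff_injective.1 h₀).bijective_of_nat_card_le (by simp [hX])
  set e := Equiv.ofBijective _ hbij
  have he (u : ZMod p) : f₀ (e.symm u) = u := e.apply_symm_apply u
  obtain ⟨m, c, hmc⟩ := exists_eq_mul_add_of_card_injective (fun u => f₁ (e.symm u)) <| by
    convert h using 5 with t
    rw [Set.injOn_iff_injective, ← e.symm.injective_comp]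
    simp only [comp_def, Set.domRestrict_apply, he]
  refine ⟨m, c, fun v hv => ?_⟩
  have : e.symm (f₀ v) = ⟨v, hv⟩ := e.symm_apply_eq.2 rfl
  simpa [this] using hmc (f₀ v)

def lineForm (a b : ZMod p) : ZMod p × ZMod p →+ ZMod p :=
  AddMonoidHom.mk' (fun v : ZMod p × ZMod p => a * v.1 - b * v.2) fun v w => by
    simp only [Prod.fst_add, Prod.snd_add]; ring

@[simp]
lemma lineForm_apply (a b : ZMod p) (v : ZMod p × ZMod p) : lineForm a b v = a * v.1 - b * v.2 :=
  rfl

/-- The `p + 1` directions of the plane, each given by a linear form vanishing along it. -/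
def direction : Option (ZMod p) → ZMod p × ZMod p →+ ZMod p
  | none => lineForm 1 0
  | some t => lineForm t 1

lemma lineForm_surjective {a b : ZMod p} (h : (a, b) ≠ 0) : Surjective (lineForm a b) := by
  intro w
  rcases eq_or_ne a 0 with rfl | ha
  · have hb : b ≠ 0 := by simpa using h
    exact ⟨(0, -(b⁻¹ * w)), by simp [hb]⟩
  · exact ⟨(a⁻¹ * w, 0), by simp [ha]⟩

lemma direction_surjective (o : Option (ZMod p)) : Surjective (direction o) := by
  cases o <;> exact lineForm_surjective (by simp [Prod.ext_iff])

lemma preimage_lineForm {a b : ZMod p} (h : (a, b) ≠ 0) (w : ZMod p × ZMod p) :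
    lineForm a b ⁻¹' {lineForm a b w} = Set.range fun n => (b * n + w.1, a * n + w.2) := by
  ext v
  simp only [Set.mem_preimage, Set.mem_singleton_iff, lineForm_apply, Set.mem_range]
  constructor
  · intro hv
    rcases eq_or_ne a 0 with rfl | ha
    · have hb : b ≠ 0 := by simpa using h
      refine ⟨b⁻¹ * (v.1 - w.1), Prod.ext (by field_simp; ring) ?_⟩
      simpa [hb, eq_comm] using hv
    · refine ⟨a⁻¹ * (v.2 - w.2), Prod.ext ?_ (by field_simp; ring)⟩
      linear_combination (v.1 - w.1) * mul_inv_cancel₀ ha - a⁻¹ * hv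
  · rintro ⟨n, rfl⟩
    ring

lemma ncard_range_line {a b : ZMod p} (h : (a, b) ≠ 0) (c d : ZMod p) :
    (Set.range fun n => (b * n + c, a * n + d)).ncard = p := by
  rw [Set.ncard_range_of_injective, Nat.card_zmod]
  intro n n' hn
  simp only [Prod.mk.injEq, add_left_inj] at hn
  rcases eq_or_ne a 0 with rfl | ha
  · exact mul_left_cancel₀ (by simpa using h) hn.1
  · exact mul_left_cancel₀ ha hn.2

open scoped Classical in
/-- Measured against the direction `t₀`, the direction `t ≠ t₀` has slope `(t₀ - t)⁻¹` and the
direction `none` has slope `0`. -/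
lemma card_injOn_direction_le {X : Set (ZMod p × ZMod p)} {t₀ : ZMod p}
    (ht₀ : Set.InjOn (direction (some t₀)) X) :
    #{o | Set.InjOn (direction o) X} - 1 ≤
      #{t | Set.InjOn (fun v => v.1 - t * lineForm t₀ 1 v) X} := by
  set T := ({o | Set.InjOn (direction o) X} : Finset (Option (ZMod p)))
  set s : Option (ZMod p) → ZMod p := fun o => o.elim 0 fun t => (t₀ - t)⁻¹
  have hs (o) (ho : o ≠ some t₀) : ∃ c ≠ 0,
      (fun v => v.1 - s o * lineForm t₀ 1 v) = fun v => c * direction o v := by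
    rcases o with _ | t
    · exact ⟨1, one_ne_zero, by ext; simp [s, direction]⟩
    · have ht : t₀ - t ≠ 0 := sub_ne_zero.2 fun h => ho (by rw [h])
      refine ⟨-(t₀ - t)⁻¹, by simpa using ht, funext fun v => ?_⟩
      simp only [s, direction, lineForm_apply, Option.elim_some]
      linear_combination -v.1 * mul_inv_cancel₀ ht
  have hsinj : Set.InjOn s (T.erase (some t₀)) := by
    rintro (_ | t) ht (_ | t') ht' hst <;>
      simp only [coe_erase, Set.mem_sdiff, Set.mem_singleton_iff, Option.some_inj] at ht ht'
    all_goals simp only [s, Option.elim_none, Option.elim_some] at hst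
    · rfl
    · exact absurd hst.symm (inv_ne_zero (sub_ne_zero.2 (Ne.symm ht'.2)))
    · exact absurd hst (inv_ne_zero (sub_ne_zero.2 (Ne.symm ht.2)))
    · exact congrArg some (sub_right_inj.1 (inv_inj.1 hst))
  have hsub : (T.erase (some t₀)).image s ⊆
      ({t | Set.InjOn (fun v => v.1 - t * lineForm t₀ 1 v) X} : Finset (ZMod p)) := by
    intro t ht
    obtain ⟨o, ho, rfl⟩ := mem_image.1 ht
    obtain ⟨ho₀, hoT⟩ := mem_erase.1 ho
    obtain ⟨c, hc, hfun⟩ := hs o ho₀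
    rw [mem_filter, hfun]
    exact ⟨mem_univ _, (mul_right_injective₀ hc).comp_injOn (mem_filter.1 hoT).2⟩
  have := card_le_card hsub
  rwa [card_image_of_injOn hsinj, card_erase_of_mem (s := T) (mem_filter.2 ⟨mem_univ _, ht₀⟩)]
    at this

open scoped Classical in
lemma exists_lineForm_eq_of_card_injOn {X : Set (ZMod p × ZMod p)} (hX : X.ncard = p)
    (h : p + 1 ≤ 2 * #{o | Set.InjOn (direction o) X}) :
    ∃ a b, (a, b) ≠ 0 ∧ ∃ c, ∀ v ∈ X, lineForm a b v = c := by
  have hp2 := hp.out.two_le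
  obtain ⟨t₀, ht₀⟩ : ∃ t₀, Set.InjOn (direction (some t₀)) X := by
    by_contra! hT
    have : ({o | Set.InjOn (direction o) X} : Finset _) ⊆ {none} := fun o ho => by
      cases o <;> simp_all
    have := card_le_card this
    rw [card_singleton] at this
    omega
  have hcount := card_injOn_direction_le ht₀
  obtain ⟨m, c, hmc⟩ := exists_forall_eq_mul_add_of_injOn hX (f₀ := lineForm t₀ 1) (f₁ := Prod.fst)
    ht₀ (by omega)
  refine ⟨1 - m * t₀, -m, fun h => ?_, c, fun v hv => ?_⟩
  · simp only [Prod.mk_eq_zero, neg_eq_zero] at h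
    simp [h.2] at h
  · have := hmc v hv
    simp only [lineForm_apply] at this ⊢
    linear_combination this

open scoped Classical in
lemma IsFactorization.exists_lineForm_eq {A B : Set (ZMod p × ZMod p)} (h : IsFactorization A B)
    (hA : A.ncard = p) (hB : B.ncard = p) :
    (∃ a b, (a, b) ≠ 0 ∧ ∃ c, ∀ v ∈ A, lineForm a b v = c) ∨
      (∃ a b, (a, b) ≠ 0 ∧ ∃ c, ∀ v ∈ B, lineForm a b v = c) := by
  have hunion : (univ : Finset (Option (ZMod p))) =
      ({o | Set.InjOn (direction o) A} : Finset _) ∪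
        ({o | Set.InjOn (direction o) B} : Finset _) := by
    rw [← filter_or, filter_true_of_mem fun o _ => h.injOn_or_injOn hA hB (direction_surjective o)]
  have hcard := card_union_le ({o | Set.InjOn (direction o) A} : Finset _)
    ({o | Set.InjOn (direction o) B} : Finset _)
  rw [← hunion, card_univ, Fintype.card_option, ZMod.card] at hcard
  by_cases hA' : p + 1 ≤ 2 * #{o | Set.InjOn (direction o) A}
  · exact Or.inl (exists_lineForm_eq_of_card_injOn hA hA')
  · exact Or.inr (exists_lineForm_eq_of_card_injOn hB (by omega))

lemma IsPerfectCode.ncard_eq {S C : Set (ZMod p × ZMod p)} (h : IsPerfectCode S C)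
    (hS : S ⊂ {0}ᶜ) (hS' : S.Nonempty) : (insert 0 S).ncard = p ∧ C.ncard = p := by
  have hmul := IsFactorization.ncard_mul_ncard h
  rw [Nat.card_prod, Nat.card_zmod] at hmul
  have hS₀ : (insert 0 S).ncard ≠ 1 := by
    obtain ⟨s, hs⟩ := hS'
    exact ((Set.one_lt_ncard).2 ⟨0, Set.mem_insert _ _, s, Set.mem_insert_of_mem _ hs,
      fun h => hS.1 hs h.symm⟩).ne'
  have hC : C.ncard ≠ 1 := by
    intro hC
    obtain ⟨g, hg, hgS⟩ := Set.exists_of_ssubset hS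
    have hlt := Set.ncard_lt_ncard (s := insert 0 S) (t := Set.univ)
      ⟨Set.subset_univ _, fun h' => (h' (Set.mem_univ g)).elim hg hgS⟩
    rw [Set.ncard_univ, Nat.card_prod, Nat.card_zmod] at hlt
    rw [hC, mul_one] at hmul
    omega
  have hS₀p := hp.out.eq_of_mul_eq_mul_self hmul hS₀ hC
  exact ⟨hS₀p, hp.out.eq_of_mul_eq_mul_self (by rw [mul_comm, hmul]) hC hS₀⟩

lemma not_forall_lineForm_insert_zero_eq {S : Set (ZMod p × ZMod p)}
    (hgen : AddSubgroup.closure S = ⊤) {a b : ZMod p} (hab : (a, b) ≠ 0) (c : ZMod p) :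
    ¬ ∀ v ∈ insert 0 S, lineForm a b v = c := by
  intro hc
  have hc0 : c = 0 := by simpa using (hc 0 (Set.mem_insert _ _)).symm
  have hker : AddSubgroup.closure S ≤ (lineForm a b).ker :=
    (AddSubgroup.closure_le _).2 fun v hv => by simpa [hc0] using hc v (Set.mem_insert_of_mem _ hv)
  obtain ⟨v, hv⟩ := lineForm_surjective hab 1
  exact absurd (hker (hgen ▸ AddSubgroup.mem_top v)) (by simp [hv])

lemma exists_eq_range_of_forall_lineForm_eq {C : Set (ZMod p × ZMod p)} (hC : C.ncard = p)
    {a b : ZMod p} (hab : (a, b) ≠ 0) {c : ZMod p} (hc : ∀ v ∈ C, lineForm a b v = c) :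
    ∃ c d : ZMod p, C = Set.range fun n : ZMod p => (b * n + c, a * n + d) := by
  obtain ⟨w, hw⟩ : C.Nonempty := Set.nonempty_of_ncard_ne_zero (by rw [hC]; exact hp.out.ne_zero)
  refine ⟨w.1, w.2, Set.eq_of_subset_of_ncard_le (fun v hv => ?_) ?_⟩
  · rw [← preimage_lineForm hab w]
    simp [hc v hv, hc w hw]
  · rw [ncard_range_line hab, hC]

lemma isPerfectCode_range {S : Set (ZMod p × ZMod p)} (h0S : 0 ∉ S) (hS : S.ncard = p - 1)
    {a b : ZMod p} (himg : lineForm a b '' insert 0 S = Set.univ) (c d : ZMod p) :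
    IsPerfectCode S (Set.range fun n => (b * n + c, a * n + d)) := by
  have hab : (a, b) ≠ 0 := fun h => by
    obtain ⟨rfl, rfl⟩ := Prod.mk_eq_zero.1 h
    simpa using himg.ge (Set.mem_univ 1)
  have hS₀ : (insert 0 S).ncard = p := by
    have := hp.out.one_lt
    rw [Set.ncard_insert_of_notMem h0S]
    omega
  have hinj : Set.InjOn (lineForm a b) (insert 0 S) :=
    Set.injOn_of_ncard_image_eq (by rw [himg, Set.ncard_univ, Nat.card_zmod, hS₀])
  rw [show (Set.range fun n => (b * n + c, a * n + d)) = _ from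
    (preimage_lineForm hab (c, d)).symm]
  exact isFactorization_of_bijOn ⟨Set.mapsTo_univ _ _, hinj, himg.ge⟩ _

end Plane

theorem perfect_code_Zp_Zp_general (p : ℕ) (hp : p.Prime)
    (S : Set (ZMod p × ZMod p))
    (hS : S ⊂ {(0 : ZMod p × ZMod p)}ᶜ)
    (hgen : AddSubgroup.closure S = ⊤)
    (C : Set (ZMod p × ZMod p)) :
    IsPerfectCode S C ↔
      S.ncard = p - 1 ∧
        ∃ a b : ZMod p,
          (fun s : ZMod p × ZMod p => a * s.1 - b * s.2) '' insert 0 S = Set.univ ∧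
          ∃ c d : ZMod p, C = Set.range fun n : ZMod p => (b * n + c, a * n + d) := by
  have : Fact p.Prime := ⟨hp⟩
  have h0S : (0 : ZMod p × ZMod p) ∉ S := fun h => hS.1 h rfl
  constructor
  · intro hPC
    have hS' : S.Nonempty := Set.nonempty_iff_ne_empty.2 fun h => by simp [h] at hgen
    obtain ⟨hS₀, hC⟩ := hPC.ncard_eq hS hS'
    refine ⟨by rw [Set.ncard_insert_of_notMem h0S] at hS₀; omega, ?_⟩
    rcases IsFactorization.exists_lineForm_eq hPC hS₀ hC with
      ⟨a, b, hab, c, hc⟩ | ⟨a, b, hab, c, hc⟩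
    · exact absurd hc (not_forall_lineForm_insert_zero_eq hgen hab c)
    · exact ⟨a, b, IsFactorization.image_eq_univ hPC (lineForm_surjective hab) hc,
        exists_eq_range_of_forall_lineForm_eq hC hab hc⟩
  · rintro ⟨hcard, a, b, himg, c, d, rfl⟩
    exact isPerfectCode_range h0S hcard himg c d

/-- Perfect codes in Cayley graphs of `Z_p × Z_p` for an odd prime `p`. -/
theorem perfect_code_Zp_Zp (p : ℕ) (hp : p.Prime) (hodd : Odd p)
    (S : Set (ZMod p × ZMod p))
    (hS : S ⊂ {(0 : ZMod p × ZMod p)}ᶜ)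
    (hgen : AddSubgroup.closure S = ⊤)
    (C : Set (ZMod p × ZMod p)) :
    IsPerfectCode S C ↔
      S.ncard = p - 1 ∧
        ∃ a b : ZMod p,
          (fun s : ZMod p × ZMod p => a * s.1 - b * s.2) '' insert 0 S = Set.univ ∧
          ∃ c d : ZMod p, C = Set.range fun n : ZMod p => (b * n + c, a * n + d) :=
  perfect_code_Zp_Zp_general p hp S hS hgen C
end
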